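/- Let N ≥ 2 and let γ : Fin (N−1) → ℝ be arbitrary. Let H_0 be the XX chain Hamiltonian of length N with couplings γ, and let S = ⊗_{j=1}^N P_j be the Pauli word with P_j = X for odd j and P_j = Y for even j. Then S is an internal symmetry of the controlled system with controls Z_1 and X_2: H_0ᵀ·S + S·H_0 = 0, Z_1ᵀ·S + S·Z_1 = 0, and X_2ᵀ·S + S·X_2 = 0 (where Mᵀ denotes the transpose). -/

import Mathlib

open Matrix Complex Finset

/-- The Pauli X matrix. -/
noncomputable def PauliX : Matrix (Fin 2) (Fin 2) ℂ := !![0, 1; 1, 0]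
/-- The Pauli Y matrix. -/
noncomputable def PauliY : Matrix (Fin 2) (Fin 2) ℂ := !![0, -Complex.I; Complex.I, 0]
/-- The Pauli Z matrix. -/
noncomputable def PauliZ : Matrix (Fin 2) (Fin 2) ℂ := !![1, 0; 0, -1]

/-- Tensor product of `N` single-qubit matrices: the entry at `(x, y)` is `∏ j, (P j) (x j) (y j)`. -/
noncomputable def kronN {N : ℕ} (P : Fin N → Matrix (Fin 2) (Fin 2) ℂ) :
    Matrix (Fin N → Fin 2) (Fin N → Fin 2) ℂ :=
  Matrix.of fun x y => ∏ j, P j (x j) (y j)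

/-- The single-qubit operator `R` acting on site `k`, identity elsewhere. -/
noncomputable def localOp {N : ℕ} (k : Fin N) (R : Matrix (Fin 2) (Fin 2) ℂ) :
    Matrix (Fin N → Fin 2) (Fin N → Fin 2) ℂ :=
  kronN (fun m => if m = k then R else 1)

/-- The two-site operator with `R` at site `j`, `R'` at site `k`, identity elsewhere. -/
noncomputable def twoOp {N : ℕ} (j k : Fin N) (R R' : Matrix (Fin 2) (Fin 2) ℂ) :
    Matrix (Fin N → Fin 2) (Fin N → Fin 2) ℂ :=
  kronN (fun m => if m = j then R else if m = k then R' else 1)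

/-- Left site of the `j`-th bond of a chain of length `N`. -/
def siteL {N : ℕ} (j : Fin (N - 1)) : Fin N := ⟨j.val, by have := j.isLt; omega⟩
/-- Right site of the `j`-th bond of a chain of length `N`. -/
def siteR {N : ℕ} (j : Fin (N - 1)) : Fin N := ⟨j.val + 1, by have := j.isLt; omega⟩

/-- The XYZ chain Hamiltonian of length `N` with couplings `a b c : Fin (N-1) → ℝ`:
`H₀ = Σ_j (a_j X_j X_{j+1} + b_j Y_j Y_{j+1} + c_j Z_j Z_{j+1})`. -/
noncomputable def xyzChain (N : ℕ) (a b c : Fin (N - 1) → ℝ) :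
    Matrix (Fin N → Fin 2) (Fin N → Fin 2) ℂ :=
  ∑ j : Fin (N - 1),
    ((a j : ℂ) • twoOp (siteL j) (siteR j) PauliX PauliX +
     (b j : ℂ) • twoOp (siteL j) (siteR j) PauliY PauliY +
     (c j : ℂ) • twoOp (siteL j) (siteR j) PauliZ PauliZ)

/-- The XX chain Hamiltonian of length `N` with couplings `γ : Fin (N-1) → ℝ`:
`H₀ = Σ_j γ_j (X_j X_{j+1} + Y_j Y_{j+1})`. -/
noncomputable def xxChain (N : ℕ) (γ : Fin (N - 1) → ℝ) :
    Matrix (Fin N → Fin 2) (Fin N → Fin 2) ℂ :=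
  ∑ j : Fin (N - 1),
    (γ j : ℂ) • (twoOp (siteL j) (siteR j) PauliX PauliX +
                 twoOp (siteL j) (siteR j) PauliY PauliY)

/-!
For tensor products `T = ⊗ T_m` and `S = ⊗ S_m` with `(T_m)ᵀ S_m = ε_m S_m T_m` at every site,
`Tᵀ S = (∏ ε_m) S T`. Against `S = X Y X Y ⋯` both `X` and `Y` pick up the sign `(-1)^m` at
site `m`, so the bonds `X_j X_{j+1}` and `Y_j Y_{j+1}` pick up `(-1)^(2j+1) = -1`; likewise `Z`
anticommutes with `X` on the first site and `X` with `Y` on the second. The condition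
`Hᵀ S + S H = 0` is linear in `H`, which gives it for the whole chain.
-/

namespace Matrix

variable {R n : Type*} [CommRing R] [Fintype n]

def internalSymmetrySubmodule (S : Matrix n n R) : Submodule R (Matrix n n R) where
  carrier := {H | Hᵀ * S + S * H = 0}
  zero_mem' := by simp
  add_mem' {A B} (hA : Aᵀ * S + S * A = 0) (hB : Bᵀ * S + S * B = 0) := by
    change (A + B)ᵀ * S + S * (A + B) = 0
    rw [transpose_add, add_mul, mul_add, add_add_add_comm, hA, hB, add_zero]
  smul_mem' c H (hH : Hᵀ * S + S * H = 0) := by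
    change (c • H)ᵀ * S + S * (c • H) = 0
    rw [transpose_smul, smul_mul, Matrix.mul_smul, ← smul_add, hH, smul_zero]

theorem mem_internalSymmetrySubmodule_of_transpose_mul_eq_neg {S H : Matrix n n R}
    (h : Hᵀ * S = (-1 : R) • (S * H)) : H ∈ internalSymmetrySubmodule S := by
  change Hᵀ * S + S * H = 0
  rw [h, neg_one_smul, neg_add_cancel]

end Matrix

theorem kronN_transpose {N : ℕ} (P : Fin N → Matrix (Fin 2) (Fin 2) ℂ) :
    (kronN P)ᵀ = kronN (fun j => (P j)ᵀ) := by
  ext x y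
  simp [kronN]

theorem kronN_mul {N : ℕ} (P Q : Fin N → Matrix (Fin 2) (Fin 2) ℂ) :
    kronN P * kronN Q = kronN (fun j => P j * Q j) := by
  ext x y
  simp only [kronN, mul_apply, of_apply]
  rw [Finset.prod_univ_sum]
  simp [Fintype.piFinset_univ, Finset.prod_mul_distrib]

theorem kronN_transpose_mul_eq_smul {N : ℕ} (T S : Fin N → Matrix (Fin 2) (Fin 2) ℂ)
    (ε : Fin N → ℂ) (h : ∀ m, (T m)ᵀ * S m = ε m • (S m * T m)) :
    (kronN T)ᵀ * kronN S = (∏ m, ε m) • (kronN S * kronN T) := by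
  rw [kronN_transpose, kronN_mul, kronN_mul]
  ext x y
  simp only [kronN, of_apply, Matrix.smul_apply, smul_eq_mul, h, Finset.prod_mul_distrib]

theorem localOp_transpose_mul_kronN {N : ℕ} {k : Fin N} {R : Matrix (Fin 2) (Fin 2) ℂ}
    {S : Fin N → Matrix (Fin 2) (Fin 2) ℂ} {a : ℂ} (h : Rᵀ * S k = a • (S k * R)) :
    (localOp k R)ᵀ * kronN S = a • (kronN S * localOp k R) := by
  rw [localOp, kronN_transpose_mul_eq_smul _ _ (fun m => if m = k then a else 1),
    Finset.prod_ite_eq', if_pos (Finset.mem_univ k)]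
  intro m
  split_ifs with hm
  · exact hm ▸ h
  · simp

theorem twoOp_transpose_mul_kronN {N : ℕ} {j k : Fin N} (hjk : j ≠ k)
    {R R' : Matrix (Fin 2) (Fin 2) ℂ} {S : Fin N → Matrix (Fin 2) (Fin 2) ℂ} {a b : ℂ}
    (hj : Rᵀ * S j = a • (S j * R)) (hk : R'ᵀ * S k = b • (S k * R')) :
    (twoOp j k R R')ᵀ * kronN S = (a * b) • (kronN S * twoOp j k R R') := by
  rw [twoOp, kronN_transpose_mul_eq_smul _ _
    (fun m => if m = j then a else if m = k then b else 1)]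
  · rw [Finset.prod_eq_mul j k hjk (fun m _ hm => by simp [hm.1, hm.2]) (by simp) (by simp),
      if_pos rfl, if_neg hjk.symm, if_pos rfl]
  · intro m
    split_ifs with hmj hmk
    · exact hmj ▸ hj
    · exact hmk ▸ hk
    · simp

theorem PauliX_transpose : PauliXᵀ = PauliX := by
  ext i j; fin_cases i <;> fin_cases j <;> simp [PauliX]

theorem PauliY_transpose : PauliYᵀ = -PauliY := by
  ext i j; fin_cases i <;> fin_cases j <;> simp [PauliY]

theorem PauliZ_transpose : PauliZᵀ = PauliZ := by
  ext i j; fin_cases i <;> fin_cases j <;> simp [PauliZ]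

theorem PauliY_mul_PauliX : PauliY * PauliX = -(PauliX * PauliY) := by
  ext i j; fin_cases i <;> fin_cases j <;> simp [PauliX, PauliY, mul_apply]

theorem PauliX_mul_PauliZ : PauliX * PauliZ = -(PauliZ * PauliX) := by
  ext i j; fin_cases i <;> fin_cases j <;> simp [PauliX, PauliZ, mul_apply]

/-- Sites are numbered from `0`, so this is `X₁ Y₂ X₃ ⋯` in the paper's numbering. -/
noncomputable def alternatingXY (N : ℕ) : Fin N → Matrix (Fin 2) (Fin 2) ℂ :=
  fun m => if m.val % 2 = 0 then PauliX else PauliY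

/-- Both `X` and `Y` satisfy `Pᵀ X = X P` and `Pᵀ Y = -(Y P)`, so the sign only depends on the
letter of the word at `m`. -/
theorem transpose_mul_alternatingXY {N : ℕ} {P : Matrix (Fin 2) (Fin 2) ℂ}
    (hP : P = PauliX ∨ P = PauliY) (m : Fin N) :
    Pᵀ * alternatingXY N m = (-1 : ℂ) ^ (m : ℕ) • (alternatingXY N m * P) := by
  rcases Nat.even_or_odd (m : ℕ) with hm | hm
  · rcases hP with rfl | rfl <;>
      simp [alternatingXY, Nat.even_iff.mp hm, hm.neg_one_pow, PauliX_transpose,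
        PauliY_transpose, PauliY_mul_PauliX]
  · rcases hP with rfl | rfl <;>
      simp [alternatingXY, Nat.odd_iff.mp hm, hm.neg_one_pow, PauliX_transpose,
        PauliY_transpose, PauliY_mul_PauliX]

theorem bond_mem_internalSymmetrySubmodule {N : ℕ} {P : Matrix (Fin 2) (Fin 2) ℂ}
    (hP : P = PauliX ∨ P = PauliY) (j : Fin (N - 1)) :
    twoOp (siteL j) (siteR j) P P ∈ internalSymmetrySubmodule (kronN (alternatingXY N)) := by
  apply mem_internalSymmetrySubmodule_of_transpose_mul_eq_neg
  rw [twoOp_transpose_mul_kronN (by simp [siteL, siteR, Fin.ext_iff])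
    (transpose_mul_alternatingXY hP _) (transpose_mul_alternatingXY hP _),
    siteL, siteR, pow_succ, ← mul_assoc, ← pow_add, Even.neg_one_pow ⟨_, rfl⟩, one_mul]

theorem xxChain_mem_internalSymmetrySubmodule (N : ℕ) (γ : Fin (N - 1) → ℝ) :
    xxChain N γ ∈ internalSymmetrySubmodule (kronN (alternatingXY N)) :=
  Submodule.sum_mem _ fun j _ => Submodule.smul_mem _ _ <|
    add_mem (bond_mem_internalSymmetrySubmodule (.inl rfl) j)
      (bond_mem_internalSymmetrySubmodule (.inr rfl) j)

/-- The Pauli word `S = X_1 Y_2 X_3 Y_4 ⋯` (X on odd sites, Y on even sites, 1-indexed) is an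
internal symmetry of the XX chain with controls `Z_1` and `X_2`. -/
theorem xx_internal_symmetry (N : ℕ) (hN : 2 ≤ N) (γ : Fin (N - 1) → ℝ) :
    let H₀ := xxChain N γ
    let H₁ : Matrix (Fin N → Fin 2) (Fin N → Fin 2) ℂ := localOp ⟨0, by omega⟩ PauliZ
    let H₂ : Matrix (Fin N → Fin 2) (Fin N → Fin 2) ℂ := localOp ⟨1, by omega⟩ PauliX
    let S : Matrix (Fin N → Fin 2) (Fin N → Fin 2) ℂ :=
      kronN (fun j => if j.val % 2 = 0 then PauliX else PauliY)
    H₀ᵀ * S + S * H₀ = 0 ∧ H₁ᵀ * S + S * H₁ = 0 ∧ H₂ᵀ * S + S * H₂ = 0 := by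
  intro H₀ H₁ H₂ S
  refine ⟨xxChain_mem_internalSymmetrySubmodule N γ, ?_, ?_⟩
  · apply mem_internalSymmetrySubmodule_of_transpose_mul_eq_neg
    apply localOp_transpose_mul_kronN
    simp [PauliZ_transpose, PauliX_mul_PauliZ]
  · apply mem_internalSymmetrySubmodule_of_transpose_mul_eq_neg
    have hX := transpose_mul_alternatingXY (N := N) (.inl rfl) ⟨1, by omega⟩
    rw [pow_one] at hX
    exact localOp_transpose_mul_kronN hX
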